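/- arXiv:1006.0659 — 2 statements merged into one kernel-verified Lean document; each statement's English description precedes it below -/
import Mathlib

section
/- (Role model theorem, inequality) If X, Y and Z form a Markov chain X–Y–Z, then the expected divergence satisfies E D(P_{X|Y}‖Q_{X|Z}) = Σ_{y,z} P_{YZ}(y,z) D(P_{X|Y=y}‖Q(·|z)) ≥ H(X|Z) − H(X|Y). -/
open Finset Real

/-!
By the Markov property `P_{YZ}(y,z) P_{X|Y}(x|y) = P(x,y,z)`, so the expected divergence splits as
`-H(X|Y) - ∑_{x,z} P_{XZ}(x,z) log Q(x|z)`. The last term is a conditional cross-entropy, and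
Gibbs' inequality, applied for each `z` to `P_{XZ}(·,z)` against `P_Z(z) Q(·|z)` (which have the
same total mass), bounds it below by `H(X|Z)`.
-/

theorem sub_le_mul_log_div {p q : ℝ} (hp : 0 ≤ p) (hq : 0 ≤ q) (hpq : 0 < p → 0 < q) :
    p - q ≤ p * log (p / q) := by
  rcases hp.eq_or_lt with rfl | hp
  · simpa using hq
  have hq := hpq hp
  calc p - q = p * (1 - (p / q)⁻¹) := by field_simp
    _ ≤ p * log (p / q) := by gcongr; exact one_sub_inv_le_log_of_pos (div_pos hp hq)

theorem sum_mul_logb_div_nonneg {ι : Type*} (s : Finset ι) {b : ℝ} (hb : 1 < b) {p q : ι → ℝ}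
    (hp : ∀ i ∈ s, 0 ≤ p i) (hq : ∀ i ∈ s, 0 ≤ q i) (hpq : ∀ i ∈ s, 0 < p i → 0 < q i)
    (hsum : ∑ i ∈ s, q i ≤ ∑ i ∈ s, p i) :
    0 ≤ ∑ i ∈ s, p i * logb b (p i / q i) := by
  have hlog : 0 ≤ ∑ i ∈ s, p i * log (p i / q i) :=
    calc 0 ≤ ∑ i ∈ s, (p i - q i) := by rw [sum_sub_distrib]; linarith
      _ ≤ _ := sum_le_sum fun i hi => sub_le_mul_log_div (hp i hi) (hq i hi) (hpq i hi)
  simp_rw [logb, mul_div_assoc', ← sum_div]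
  exact div_nonneg hlog (log_pos hb).le

theorem sum_mul_logb_le_sum_mul_logb_div_sum {ι : Type*} [Fintype ι] {b : ℝ} (hb : 1 < b)
    {r c q : ι → ℝ} (hr : ∀ i, 0 ≤ r i) (hc : ∀ i, 0 < r i → c i = r i / ∑ j, r j)
    (hq : ∀ i, 0 ≤ q i) (hqsum : ∑ i, q i = 1) (hrq : ∀ i, 0 < r i → 0 < q i) :
    ∑ i, r i * logb b (q i) ≤ ∑ i, r i * logb b (c i) := by
  set m := ∑ j, r j
  have hm : 0 ≤ m := sum_nonneg fun j _ => hr j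
  have hm_pos : ∀ i, 0 < r i → 0 < m := fun i hi =>
    hi.trans_le (single_le_sum (fun j _ => hr j) (mem_univ i))
  have hgibbs := sum_mul_logb_div_nonneg univ hb (q := fun i => m * q i) (fun i _ => hr i)
    (fun i _ => mul_nonneg hm (hq i)) (fun i _ hi => mul_pos (hm_pos i hi) (hrq i hi))
    (by rw [← mul_sum, hqsum, mul_one])
  have hterm : ∀ i, r i * logb b (r i / (m * q i)) = r i * logb b (c i) - r i * logb b (q i) := by
    intro i
    rcases (hr i).eq_or_lt with h | h
    · simp [← h]
    rw [← div_div, ← hc i h, logb_div, mul_sub]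
    · rw [hc i h]; exact (div_pos h (hm_pos i h)).ne'
    · exact (hrq i h).ne'
  simpa only [hterm, sum_sub_distrib, sub_nonneg] using hgibbs

theorem mul_condProb_eq_joint_of_markov {𝒳 𝒴 𝒵 : Type*} [Fintype 𝒳] [Fintype 𝒵]
    {P : 𝒳 → 𝒴 → 𝒵 → ℝ} {PY : 𝒴 → ℝ} {PXY PXgY : 𝒳 → 𝒴 → ℝ} {PYZ : 𝒴 → 𝒵 → ℝ}
    (hPnn : ∀ x y z, 0 ≤ P x y z) (hPY : ∀ y, PY y = ∑ x, ∑ z, P x y z)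
    (hPYZ : ∀ y z, PYZ y z = ∑ x, P x y z)
    (hMarkov : ∀ x y z, P x y z * PY y = PXY x y * PYZ y z)
    (hPXgY : ∀ x y, 0 < PY y → PXgY x y = PXY x y / PY y) (x : 𝒳) (y : 𝒴) (z : 𝒵) :
    PYZ y z * PXgY x y = P x y z := by
  have hPnn' : ∀ x, 0 ≤ ∑ z, P x y z := fun x => sum_nonneg fun z _ => hPnn x y z
  rcases (show 0 ≤ PY y by rw [hPY]; exact sum_nonneg fun x _ => hPnn' x).eq_or_lt with h | h
  · have hP : ∀ x z, P x y z = 0 := by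
      rw [eq_comm, hPY, Fintype.sum_eq_zero_iff_of_nonneg hPnn'] at h
      exact fun x => congrFun ((Fintype.sum_eq_zero_iff_of_nonneg (hPnn x y)).1 (congrFun h x))
    simp [hPYZ, hP]
  · rw [hPXgY x y h, mul_div_assoc', div_eq_iff h.ne', hMarkov, mul_comm]

theorem sum_mul_sum_mul_logb_div_eq_sub {𝒳 𝒴 𝒵 : Type*} [Fintype 𝒳] [Fintype 𝒴] [Fintype 𝒵]
    {P : 𝒳 → 𝒴 → 𝒵 → ℝ} {PXY PXgY : 𝒳 → 𝒴 → ℝ} {PXZ : 𝒳 → 𝒵 → ℝ} {PYZ : 𝒴 → 𝒵 → ℝ}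
    {Q : 𝒵 → 𝒳 → ℝ} (b : ℝ) (hPnn : ∀ x y z, 0 ≤ P x y z)
    (hPXY : ∀ x y, PXY x y = ∑ z, P x y z) (hPXZ : ∀ x z, PXZ x z = ∑ y, P x y z)
    (hjoint : ∀ x y z, PYZ y z * PXgY x y = P x y z)
    (hQpos : ∀ x z, 0 < PXZ x z → 0 < Q z x) :
    ∑ y, ∑ z, PYZ y z * (∑ x, PXgY x y * logb b (PXgY x y / Q z x)) =
      ∑ x, ∑ y, PXY x y * logb b (PXgY x y) - ∑ x, ∑ z, PXZ x z * logb b (Q z x) := by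
  have hsplit : ∀ x y z, P x y z * logb b (PXgY x y / Q z x) =
      P x y z * logb b (PXgY x y) - P x y z * logb b (Q z x) := by
    intro x y z
    rcases (hPnn x y z).eq_or_lt with h | h
    · simp [← h]
    have hg : PXgY x y ≠ 0 := by
      rintro h0
      rw [← hjoint, h0, mul_zero] at h
      exact h.false
    have hle : P x y z ≤ PXZ x z := by
      rw [hPXZ]; exact single_le_sum (fun y _ => hPnn x y z) (mem_univ y)
    have hq : Q z x ≠ 0 := (hQpos x z (h.trans_le hle)).ne'
    rw [logb_div hg hq, mul_sub]
  calc _ = ∑ x, ∑ y, ∑ z, P x y z * logb b (PXgY x y / Q z x) := by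
        simp_rw [mul_sum, ← mul_assoc, hjoint]
        exact (sum_congr rfl fun _ _ => sum_comm).trans sum_comm
    _ = _ := by
        simp_rw [hsplit, sum_sub_distrib, hPXY, hPXZ, sum_mul]
        rw [sub_right_inj]; exact sum_congr rfl fun _ _ => sum_comm

theorem stmt5_general {𝒳 𝒴 𝒵 : Type*} [Fintype 𝒳] [Fintype 𝒴] [Fintype 𝒵]
    (P : 𝒳 → 𝒴 → 𝒵 → ℝ)
    (hPnn : ∀ x y z, 0 ≤ P x y z)
    (PY : 𝒴 → ℝ) (hPY : ∀ y, PY y = ∑ x, ∑ z, P x y z)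
    (PZ : 𝒵 → ℝ) (hPZ : ∀ z, PZ z = ∑ x, ∑ y, P x y z)
    (PXY : 𝒳 → 𝒴 → ℝ) (hPXY : ∀ x y, PXY x y = ∑ z, P x y z)
    (PXZ : 𝒳 → 𝒵 → ℝ) (hPXZ : ∀ x z, PXZ x z = ∑ y, P x y z)
    (PYZ : 𝒴 → 𝒵 → ℝ) (hPYZ : ∀ y z, PYZ y z = ∑ x, P x y z)
    (hMarkov : ∀ x y z, P x y z * PY y = PXY x y * PYZ y z)
    (PXgY : 𝒳 → 𝒴 → ℝ) (hPXgY : ∀ x y, 0 < PY y → PXgY x y = PXY x y / PY y)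
    (PXgZ : 𝒳 → 𝒵 → ℝ) (hPXgZ : ∀ x z, 0 < PZ z → PXgZ x z = PXZ x z / PZ z)
    (Q : 𝒵 → 𝒳 → ℝ)
    (hQnn : ∀ z x, 0 ≤ Q z x)
    (hQsum : ∀ z, ∑ x, Q z x = 1)
    (hQpos : ∀ x z, 0 < PXZ x z → 0 < Q z x)
    : (∑ y, ∑ z, PYZ y z * (∑ x, PXgY x y * logb 2 (PXgY x y / Q z x))) ≥ (-∑ x, ∑ z, PXZ x z * logb 2 (PXgZ x z)) - (-∑ x, ∑ y, PXY x y * logb 2 (PXgY x y)) := by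
  have hjoint := mul_condProb_eq_joint_of_markov hPnn hPY hPYZ hMarkov hPXgY
  have hPXZnn : ∀ x z, 0 ≤ PXZ x z := fun x z => hPXZ x z ▸ sum_nonneg fun y _ => hPnn x y z
  have hPZ_eq : ∀ z, PZ z = ∑ x, PXZ x z := fun z => by simp only [hPZ, hPXZ]
  have hcross : ∑ x, ∑ z, PXZ x z * logb 2 (Q z x) ≤ ∑ x, ∑ z, PXZ x z * logb 2 (PXgZ x z) := by
    rw [sum_comm, sum_comm (f := fun x z => PXZ x z * logb 2 (PXgZ x z))]
    refine sum_le_sum fun z _ => sum_mul_logb_le_sum_mul_logb_div_sum one_lt_two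
      (fun x => hPXZnn x z) (fun x hx => ?_) (hQnn z) (hQsum z) (fun x => hQpos x z)
    rw [← hPZ_eq]
    exact hPXgZ x z <| hx.trans_le <| (hPZ_eq z).symm ▸
      single_le_sum (fun x _ => hPXZnn x z) (mem_univ x)
  rw [sum_mul_sum_mul_logb_div_eq_sub 2 hPnn hPXY hPXZ hjoint hQpos]
  linarith

theorem stmt5 {𝒳 𝒴 𝒵 : Type*} [Fintype 𝒳] [Fintype 𝒴] [Fintype 𝒵]
    [Nonempty 𝒳] [Nonempty 𝒴] [Nonempty 𝒵]
    (P : 𝒳 → 𝒴 → 𝒵 → ℝ)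
    (hPnn : ∀ x y z, 0 ≤ P x y z)
    (hPsum : ∑ x, ∑ y, ∑ z, P x y z = 1)
    (PX : 𝒳 → ℝ) (hPX : ∀ x, PX x = ∑ y, ∑ z, P x y z)
    (PY : 𝒴 → ℝ) (hPY : ∀ y, PY y = ∑ x, ∑ z, P x y z)
    (PZ : 𝒵 → ℝ) (hPZ : ∀ z, PZ z = ∑ x, ∑ y, P x y z)
    (PXY : 𝒳 → 𝒴 → ℝ) (hPXY : ∀ x y, PXY x y = ∑ z, P x y z)
    (PXZ : 𝒳 → 𝒵 → ℝ) (hPXZ : ∀ x z, PXZ x z = ∑ y, P x y z)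
    (PYZ : 𝒴 → 𝒵 → ℝ) (hPYZ : ∀ y z, PYZ y z = ∑ x, P x y z)
    (hMarkov : ∀ x y z, P x y z * PY y = PXY x y * PYZ y z)
    (PXgY : 𝒳 → 𝒴 → ℝ) (hPXgY : ∀ x y, 0 < PY y → PXgY x y = PXY x y / PY y)
    (PXgZ : 𝒳 → 𝒵 → ℝ) (hPXgZ : ∀ x z, 0 < PZ z → PXgZ x z = PXZ x z / PZ z)
    (Q : 𝒵 → 𝒳 → ℝ)
    (hQnn : ∀ z x, 0 ≤ Q z x)
    (hQsum : ∀ z, ∑ x, Q z x = 1)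
    (hQpos : ∀ x z, 0 < PXZ x z → 0 < Q z x)
    : (∑ y, ∑ z, PYZ y z * (∑ x, PXgY x y * logb 2 (PXgY x y / Q z x))) ≥ (-∑ x, ∑ z, PXZ x z * logb 2 (PXgZ x z)) - (-∑ x, ∑ y, PXY x y * logb 2 (PXgY x y)) :=
  stmt5_general P hPnn PY hPY PZ hPZ PXY hPXY PXZ hPXZ PYZ hPYZ hMarkov PXgY hPXgY PXgZ hPXgZ Q hQnn
    hQsum hQpos
end

section
/- (Optimality of Bayesian post-processing) Under the Markov chain X–Y–Z, the choice Q(·|z) = P_{X|Z=z} minimizes the expected divergence Σ_{y,z} P_{YZ}(y,z) D(P_{X|Y=y}‖Q(·|z)) over all admissible families Q of conditional pmfs on 𝒳, and its minimum value is H(X|Z) − H(X|Y). -/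
open Finset Real

/-- Gibbs' inequality (nonnegativity of relative entropy, natural log version). -/
lemma gibbs_aux {ι : Type*} [Fintype ι] (p q : ι → ℝ) (hp : ∀ i, 0 ≤ p i)
    (hq : ∀ i, 0 ≤ q i) (hpq : ∀ i, 0 < p i → 0 < q i)
    (hs : ∑ i, q i ≤ ∑ i, p i) : 0 ≤ ∑ i, p i * Real.log (p i / q i) := by
  have h : ∀ i, p i - q i ≤ p i * Real.log (p i / q i) := by
    intro i
    rcases (hp i).lt_or_eq with hpi | hpi
    · have hqi := hpq i hpi
      have hlog : Real.log (q i / p i) ≤ q i / p i - 1 :=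
        Real.log_le_sub_one_of_pos (div_pos hqi hpi)
      have hneg : Real.log (p i / q i) = - Real.log (q i / p i) := by
        rw [Real.log_div (ne_of_gt hpi) (ne_of_gt hqi),
            Real.log_div (ne_of_gt hqi) (ne_of_gt hpi)]; ring
      rw [hneg]
      have h2 : p i * Real.log (q i / p i) ≤ p i * (q i / p i - 1) :=
        mul_le_mul_of_nonneg_left hlog hpi.le
      have h3 : p i * (q i / p i - 1) = q i - p i := by field_simp
      nlinarith
    · rw [← hpi]; simp; linarith [hq i]
  calc (0:ℝ) ≤ ∑ i, (p i - q i) := by rw [Finset.sum_sub_distrib]; linarith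
    _ ≤ _ := Finset.sum_le_sum fun i _ => h i

lemma swap3_aux {𝒳 𝒴 𝒵 : Type*} [Fintype 𝒳] [Fintype 𝒴] [Fintype 𝒵]
    (f : 𝒴 → 𝒵 → 𝒳 → ℝ) :
    (∑ y, ∑ z, ∑ x, f y z x) = ∑ x, ∑ z, ∑ y, f y z x := by
  have h1 : (∑ y, ∑ z, ∑ x, f y z x) = ∑ y, ∑ x, ∑ z, f y z x :=
    Finset.sum_congr rfl fun y _ => Finset.sum_comm
  have h2 : (∑ y, ∑ x, ∑ z, f y z x) = ∑ x, ∑ y, ∑ z, f y z x := Finset.sum_comm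
  have h3 : (∑ x, ∑ y, ∑ z, f y z x) = ∑ x, ∑ z, ∑ y, f y z x :=
    Finset.sum_congr rfl fun x _ => Finset.sum_comm
  rw [h1, h2, h3]

theorem stmt12 {𝒳 𝒴 𝒵 : Type*} [Fintype 𝒳] [Fintype 𝒴] [Fintype 𝒵]
    [Nonempty 𝒳] [Nonempty 𝒴] [Nonempty 𝒵]
    (P : 𝒳 → 𝒴 → 𝒵 → ℝ)
    (hPnn : ∀ x y z, 0 ≤ P x y z)
    (hPsum : ∑ x, ∑ y, ∑ z, P x y z = 1)
    (PX : 𝒳 → ℝ) (hPX : ∀ x, PX x = ∑ y, ∑ z, P x y z)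
    (PY : 𝒴 → ℝ) (hPY : ∀ y, PY y = ∑ x, ∑ z, P x y z)
    (PZ : 𝒵 → ℝ) (hPZ : ∀ z, PZ z = ∑ x, ∑ y, P x y z)
    (PXY : 𝒳 → 𝒴 → ℝ) (hPXY : ∀ x y, PXY x y = ∑ z, P x y z)
    (PXZ : 𝒳 → 𝒵 → ℝ) (hPXZ : ∀ x z, PXZ x z = ∑ y, P x y z)
    (PYZ : 𝒴 → 𝒵 → ℝ) (hPYZ : ∀ y z, PYZ y z = ∑ x, P x y z)
    (hMarkov : ∀ x y z, P x y z * PY y = PXY x y * PYZ y z)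
    (PXgY : 𝒳 → 𝒴 → ℝ) (hPXgY : ∀ x y, 0 < PY y → PXgY x y = PXY x y / PY y)
    (PXgZ : 𝒳 → 𝒵 → ℝ) (hPXgZ : ∀ x z, 0 < PZ z → PXgZ x z = PXZ x z / PZ z)
    : ∀ Qb : 𝒵 → 𝒳 → ℝ, (∀ z x, 0 ≤ Qb z x) → (∀ z, ∑ x, Qb z x = 1) →
      (∀ x z, 0 < PXZ x z → 0 < Qb z x) →
      (∀ z, 0 < PZ z → ∀ x, Qb z x = PXgZ x z) →
      (∀ Q : 𝒵 → 𝒳 → ℝ, (∀ z x, 0 ≤ Q z x) → (∀ z, ∑ x, Q z x = 1) →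
          (∀ x z, 0 < PXZ x z → 0 < Q z x) →
          (∑ y, ∑ z, PYZ y z * (∑ x, PXgY x y * logb 2 (PXgY x y / Qb z x))) ≤ (∑ y, ∑ z, PYZ y z * (∑ x, PXgY x y * logb 2 (PXgY x y / Q z x))))
      ∧ (∑ y, ∑ z, PYZ y z * (∑ x, PXgY x y * logb 2 (PXgY x y / Qb z x))) = (-∑ x, ∑ z, PXZ x z * logb 2 (PXgZ x z)) - (-∑ x, ∑ y, PXY x y * logb 2 (PXgY x y)) := by
  intro Qb hQbnn hQbsum hQbadm hQbdef
  -- nonnegativity of marginals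
  have hPXYnn : ∀ x y, 0 ≤ PXY x y := fun x y => by
    rw [hPXY]; exact Finset.sum_nonneg fun z _ => hPnn x y z
  have hPXZnn : ∀ x z, 0 ≤ PXZ x z := fun x z => by
    rw [hPXZ]; exact Finset.sum_nonneg fun y _ => hPnn x y z
  have hPYZnn : ∀ y z, 0 ≤ PYZ y z := fun y z => by
    rw [hPYZ]; exact Finset.sum_nonneg fun x _ => hPnn x y z
  have hPYnn : ∀ y, 0 ≤ PY y := fun y => by
    rw [hPY]; exact Finset.sum_nonneg fun x _ => Finset.sum_nonneg fun z _ => hPnn x y z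
  have hPZnn : ∀ z, 0 ≤ PZ z := fun z => by
    rw [hPZ]; exact Finset.sum_nonneg fun x _ => Finset.sum_nonneg fun y _ => hPnn x y z
  -- sum identities
  have hPYsum : ∀ y, ∑ x, PXY x y = PY y := by
    intro y; rw [hPY]; exact Finset.sum_congr rfl fun x _ => (hPXY x y)
  have hPYsumz : ∀ y, ∑ z, PYZ y z = PY y := by
    intro y; rw [hPY, Finset.sum_comm]
    exact Finset.sum_congr rfl fun z _ => (hPYZ y z).symm |>.symm
  have hPZsum : ∀ z, ∑ x, PXZ x z = PZ z := by
    intro z; rw [hPZ]; exact Finset.sum_congr rfl fun x _ => (hPXZ x z)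
  -- domination facts
  have hPXY_le : ∀ x y, PXY x y ≤ PY y := by
    intro x y; rw [← hPYsum y]
    exact Finset.single_le_sum (fun x' _ => hPXYnn x' y) (Finset.mem_univ x)
  have hPYZ_le : ∀ y z, PYZ y z ≤ PY y := by
    intro y z; rw [← hPYsumz y]
    exact Finset.single_le_sum (fun z' _ => hPYZnn y z') (Finset.mem_univ z)
  have hPXZ_le : ∀ x z, PXZ x z ≤ PZ z := by
    intro x z; rw [← hPZsum z]
    exact Finset.single_le_sum (fun x' _ => hPXZnn x' z) (Finset.mem_univ x)
  have hP_le_PXZ : ∀ x y z, P x y z ≤ PXZ x z := by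
    intro x y z; rw [hPXZ]
    exact Finset.single_le_sum (fun y' _ => hPnn x y' z) (Finset.mem_univ y)
  -- key1 : ∑ y, PYZ y z * PXgY x y = PXZ x z
  have key1 : ∀ x z, ∑ y, PYZ y z * PXgY x y = PXZ x z := by
    intro x z
    rw [hPXZ]
    refine Finset.sum_congr rfl fun y _ => ?_
    rcases (hPYnn y).lt_or_eq with hy | hy
    · rw [hPXgY x y hy]
      have hm := hMarkov x y z
      field_simp
      linear_combination -hm
    · have h1 : PYZ y z = 0 := le_antisymm (hy ▸ hPYZ_le y z) (hPYZnn y z)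
      have h2 : P x y z = 0 := by
        have hsum : ∑ x', ∑ z', P x' y z' = 0 := by rw [← hPY y, ← hy]
        have hx' : ∑ z', P x y z' = 0 :=
          (Finset.sum_eq_zero_iff_of_nonneg
            (fun x' _ => Finset.sum_nonneg fun z' _ => hPnn x' y z')).mp hsum x (Finset.mem_univ x)
        exact (Finset.sum_eq_zero_iff_of_nonneg
          (fun z' _ => hPnn x y z')).mp hx' z (Finset.mem_univ z)
      rw [h1, h2, zero_mul]
  -- key2 : the objective splits for any admissible Q
  have key2 : ∀ Q : 𝒵 → 𝒳 → ℝ, (∀ x z, 0 < PXZ x z → 0 < Q z x) →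
      (∑ y, ∑ z, PYZ y z * (∑ x, PXgY x y * logb 2 (PXgY x y / Q z x)))
      = (∑ x, ∑ y, PXY x y * logb 2 (PXgY x y)) - ∑ x, ∑ z, PXZ x z * logb 2 (Q z x) := by
    intro Q hadm
    have hterm : ∀ y z x, PYZ y z * (PXgY x y * logb 2 (PXgY x y / Q z x))
        = PYZ y z * PXgY x y * logb 2 (PXgY x y) - PYZ y z * PXgY x y * logb 2 (Q z x) := by
      intro y z x
      rcases (hPYZnn y z).lt_or_eq with hyz | hyz
      · have hy : 0 < PY y := lt_of_lt_of_le hyz (hPYZ_le y z)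
        have hXgY : PXgY x y = PXY x y / PY y := hPXgY x y hy
        have hXgYnn : 0 ≤ PXgY x y := hXgY ▸ div_nonneg (hPXYnn x y) hy.le
        rcases hXgYnn.lt_or_eq with hx | hx
        · have hXY : 0 < PXY x y := by
            by_contra hc
            push_neg at hc
            have : PXY x y = 0 := le_antisymm hc (hPXYnn x y)
            rw [hXgY, this, zero_div] at hx; exact lt_irrefl 0 hx
          have hPpos : 0 < P x y z := by
            have hm := hMarkov x y z
            nlinarith [hPnn x y z]
          have hQpos : 0 < Q z x := hadm x z (lt_of_lt_of_le hPpos (hP_le_PXZ x y z))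
          rw [Real.logb_div (ne_of_gt hx) (ne_of_gt hQpos)]
          ring
        · rw [← hx]; simp
      · rw [← hyz]; simp
    calc (∑ y, ∑ z, PYZ y z * (∑ x, PXgY x y * logb 2 (PXgY x y / Q z x)))
        = ∑ y, ∑ z, ∑ x, (PYZ y z * PXgY x y * logb 2 (PXgY x y)
            - PYZ y z * PXgY x y * logb 2 (Q z x)) := by
          refine Finset.sum_congr rfl fun y _ => Finset.sum_congr rfl fun z _ => ?_
          rw [Finset.mul_sum]
          exact Finset.sum_congr rfl fun x _ => hterm y z x
      _ = (∑ y, ∑ z, ∑ x, PYZ y z * PXgY x y * logb 2 (PXgY x y))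
            - ∑ y, ∑ z, ∑ x, PYZ y z * PXgY x y * logb 2 (Q z x) := by
          simp [Finset.sum_sub_distrib]
      _ = (∑ x, ∑ y, PXY x y * logb 2 (PXgY x y)) - ∑ x, ∑ z, PXZ x z * logb 2 (Q z x) := by
          congr 1
          · -- first piece
            have e1 : ∀ y, (∑ z, ∑ x, PYZ y z * PXgY x y * logb 2 (PXgY x y))
                = ∑ x, PXY x y * logb 2 (PXgY x y) := by
              intro y
              rw [Finset.sum_comm]
              refine Finset.sum_congr rfl fun x _ => ?_
              have : ∀ z, PYZ y z * PXgY x y * logb 2 (PXgY x y)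
                  = PYZ y z * (PXgY x y * logb 2 (PXgY x y)) := fun z => by ring
              simp_rw [this]
              rw [← Finset.sum_mul, hPYsumz y]
              rcases (hPYnn y).lt_or_eq with hy | hy
              · rw [hPXgY x y hy]
                field_simp
              · have : PXY x y = 0 := le_antisymm (hy ▸ hPXY_le x y) (hPXYnn x y)
                rw [← hy, this, zero_mul, zero_mul]
            rw [Finset.sum_congr rfl fun y _ => e1 y, Finset.sum_comm]
          · -- second piece
            rw [swap3_aux]
            refine Finset.sum_congr rfl fun x _ => Finset.sum_congr rfl fun z _ => ?_
            rw [← Finset.sum_mul, key1 x z]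
  -- the Qb objective
  have hQbeq : (∑ x, ∑ z, PXZ x z * logb 2 (Qb z x)) = ∑ x, ∑ z, PXZ x z * logb 2 (PXgZ x z) := by
    refine Finset.sum_congr rfl fun x _ => Finset.sum_congr rfl fun z _ => ?_
    rcases (hPZnn z).lt_or_eq with hz | hz
    · rw [hQbdef z hz x]
    · have : PXZ x z = 0 := le_antisymm (hz ▸ hPXZ_le x z) (hPXZnn x z)
      rw [this, zero_mul, zero_mul]
  constructor
  · -- optimality
    intro Q hQnn hQsum hQadm
    rw [key2 Qb hQbadm, key2 Q hQadm, hQbeq]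
    have hmain : (∑ x, ∑ z, PXZ x z * logb 2 (Q z x))
        ≤ ∑ x, ∑ z, PXZ x z * logb 2 (PXgZ x z) := by
      have hc1 : (∑ x, ∑ z, PXZ x z * logb 2 (Q z x))
          = ∑ z, ∑ x, PXZ x z * logb 2 (Q z x) := Finset.sum_comm
      have hc2 : (∑ x, ∑ z, PXZ x z * logb 2 (PXgZ x z))
          = ∑ z, ∑ x, PXZ x z * logb 2 (PXgZ x z) := Finset.sum_comm
      rw [hc1, hc2]
      refine Finset.sum_le_sum fun z _ => ?_
      rcases (hPZnn z).lt_or_eq with hz | hz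
      · -- PZ z > 0; use Gibbs with p = PXZ · z, q = PZ z * Q z ·
        have hgibbs : 0 ≤ ∑ x, PXZ x z * Real.log (PXZ x z / (PZ z * Q z x)) := by
          refine gibbs_aux (fun x => PXZ x z) (fun x => PZ z * Q z x)
            (fun x => hPXZnn x z) (fun x => mul_nonneg hz.le (hQnn z x))
            (fun x hx => mul_pos hz (hQadm x z hx)) ?_
          rw [← Finset.mul_sum, hQsum z, mul_one, hPZsum z]
        have hptw : ∀ x, PXZ x z * logb 2 (PXgZ x z) - PXZ x z * logb 2 (Q z x)
            = (PXZ x z * Real.log (PXZ x z / (PZ z * Q z x))) / Real.log 2 := by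
          intro x
          rcases (hPXZnn x z).lt_or_eq with hp | hp
          · have hQpos : 0 < Q z x := hQadm x z hp
            rw [hPXgZ x z hz]
            rw [Real.log_div (ne_of_gt hp) (ne_of_gt (mul_pos hz hQpos)),
                Real.log_mul (ne_of_gt hz) (ne_of_gt hQpos)]
            simp only [Real.logb, Real.log_div (ne_of_gt hp) (ne_of_gt hz)]
            ring
          · rw [← hp]; simp
        have : (∑ x, (PXZ x z * logb 2 (PXgZ x z) - PXZ x z * logb 2 (Q z x)))
            = (∑ x, PXZ x z * Real.log (PXZ x z / (PZ z * Q z x))) / Real.log 2 := by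
          rw [Finset.sum_div]
          exact Finset.sum_congr rfl fun x _ => hptw x
        have hlog2 : 0 < Real.log 2 := Real.log_pos (by norm_num)
        have h0 : 0 ≤ ∑ x, (PXZ x z * logb 2 (PXgZ x z) - PXZ x z * logb 2 (Q z x)) := by
          rw [this]; positivity
        rw [Finset.sum_sub_distrib] at h0
        linarith
      · -- PZ z = 0
        refine le_of_eq (Finset.sum_congr rfl fun x _ => ?_)
        have : PXZ x z = 0 := le_antisymm (hz ▸ hPXZ_le x z) (hPXZnn x z)
        rw [this, zero_mul, zero_mul]
    linarith
  · -- value at Qb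
    rw [key2 Qb hQbadm, hQbeq]
    ring
end
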